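/- The linear map f̂ is an algebra automorphism of Ĥ, i.e. f̂ is a bijective linear map satisfying f̂(x·y) = f̂(x)·f̂(y) for all x, y ∈ Ĥ. -/

import Mathlib

/-!
In terms of the spanning vectors, `f̂` is the uniform substitution `â_i ↦ â_{1-i}`,
`ŝ_{r̄,j} ↦ ŝ_{1̄-r̄,j}`, hence an involution and in particular bijective. The multiplication
rules (Ĥ1)–(Ĥ7) are invariant under this substitution: it preserves `|i - j|` and `i + j`,
sends the class `ī` to `1̄ - ī`, permutes the signed sums of (Ĥ5)–(Ĥ7) among themselves, and
in (Ĥ2) the coefficient `(δ_{ī,r̄} − 1) ∗ (ī − r̄)` changes sign exactly when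
`ŝ_{r̄-1̄,j} − ŝ_{r̄+1̄,j}` does. By bilinearity it suffices to check this on basis vectors,
each of which is some `â_i` or `ŝ_{r̄,j}`.
-/

namespace HatAlgebra

/-- Basis of the algebra `Ĥ`: vectors `â i` for `i : ℤ`, `ŝ_{0̄,j}` for `j` a positive
integer, and `ŝ_{1̄,3k}`, `ŝ_{2̄,3k}` for `k` a positive integer. -/
inductive HatB : Type
  | a : ℤ → HatB
  | s0 : ℕ+ → HatB
  | s1 : ℕ+ → HatB
  | s2 : ℕ+ → HatB
  deriving DecidableEq

variable (F : Type*) [Field F]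

/-- The underlying vector space of `Ĥ`: the free `F`-vector space on `HatB`. -/
abbrev HatH : Type _ := HatB →₀ F

/-- The basis vector `â i`. -/
noncomputable def aHat (i : ℤ) : HatH F := Finsupp.single (HatB.a i) 1

/-- The element `ŝ_{r̄,j}` of `Ĥ`, with the conventions `ŝ_{r̄,0} = 0` and
`ŝ_{1̄,j} = ŝ_{0̄,j} = ŝ_{2̄,j}` whenever `3 ∤ j`. -/
noncomputable def sHat (r : ZMod 3) (j : ℕ) : HatH F :=
  if h : j = 0 then 0
  else if h3 : 3 ∣ j then
    if r = 0 then Finsupp.single (HatB.s0 ⟨j, Nat.pos_of_ne_zero h⟩) 1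
    else if r = 1 then
      Finsupp.single (HatB.s1 ⟨j / 3,
        Nat.div_pos (Nat.le_of_dvd (Nat.pos_of_ne_zero h) h3) (by norm_num)⟩) 1
    else
      Finsupp.single (HatB.s2 ⟨j / 3,
        Nat.div_pos (Nat.le_of_dvd (Nat.pos_of_ne_zero h) h3) (by norm_num)⟩) 1
  else Finsupp.single (HatB.s0 ⟨j, Nat.pos_of_ne_zero h⟩) 1

/-- The operation `∗`: `(−1) ∗ 1̄ = −1`, `(−1) ∗ 2̄ = 1`, `0 ∗ t̄ = 0`. -/
def hatStar (x : ℤ) (t : ZMod 3) : ℤ :=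
  if x = 0 then 0 else if t = 1 then -1 else if t = 2 then 1 else 0

/-- The coefficient `(δ_{ī,r̄} − 1) ∗ (ī − r̄)` appearing in rule (Ĥ2). -/
def hatC (i r : ZMod 3) : ℤ := hatStar ((if i = r then 1 else 0) - 1) (i - r)

/-- Rule (Ĥ2): the product `â_i · ŝ_{r̄,j}`. -/
noncomputable def aMulS (i : ℤ) (r : ZMod 3) (j : ℕ) : HatH F :=
  (-2 : F) • aHat F i + (aHat F (i - (j : ℤ)) + aHat F (i + (j : ℤ))) - sHat F r j
    - (hatC (i : ZMod 3) r : F) • (sHat F (r - 1) j - sHat F (r + 1) j)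

/-- `ŝ_{0̄,n} + ŝ_{1̄,n} + ŝ_{2̄,n}`. -/
noncomputable def sSum (n : ℕ) : HatH F := sHat F 0 n + sHat F 1 n + sHat F 2 n

/-- For `r ≠ t` in `ℤ/3ℤ`, the signed sum `ŝ_{r̄,n} + ŝ_{t̄,n} − ŝ_{m̄,n}` where `m̄`
is the third residue class (appearing in rules (Ĥ5), (Ĥ6), (Ĥ7)). -/
noncomputable def sT (r t : ZMod 3) (n : ℕ) : HatH F :=
  sHat F r n + sHat F t n - sHat F (-(r + t)) n

/-- Rules (Ĥ3)–(Ĥ7): the product `ŝ_{r̄,i} · ŝ_{t̄,j}`. -/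
noncomputable def sMulS (r : ZMod 3) (i : ℕ) (t : ZMod 3) (j : ℕ) : HatH F :=
  if 3 ∣ i ∧ 3 ∣ j then
    if r = t then
      (2 : F) • (sHat F r i + sHat F r j) - (sHat F r (Nat.dist i j) + sHat F r (i + j))
    else
      (2 : F) • (sT F r t i + sT F r t j) - (sT F r t (Nat.dist i j) + sT F r t (i + j))
  else
    (2 : F) • (sHat F r i + sHat F t j) - (2 : F) • (sSum F (Nat.dist i j) + sSum F (i + j))

/-- The product of `Ĥ` on basis vectors, given by rules (Ĥ1)–(Ĥ7) (extended
symmetrically, since the product is commutative). -/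
noncomputable def mulB : HatB → HatB → HatH F
  | .a i, .a j => (-2 : F) • (aHat F i + aHat F j) + sHat F (i : ZMod 3) (i - j).natAbs
  | .a i, .s0 j => aMulS F i 0 (j : ℕ)
  | .s0 j, .a i => aMulS F i 0 (j : ℕ)
  | .a i, .s1 k => aMulS F i 1 (3 * (k : ℕ))
  | .s1 k, .a i => aMulS F i 1 (3 * (k : ℕ))
  | .a i, .s2 k => aMulS F i 2 (3 * (k : ℕ))
  | .s2 k, .a i => aMulS F i 2 (3 * (k : ℕ))
  | .s0 i, .s0 j => sMulS F 0 (i : ℕ) 0 (j : ℕ)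
  | .s0 i, .s1 k => sMulS F 0 (i : ℕ) 1 (3 * (k : ℕ))
  | .s1 k, .s0 i => sMulS F 0 (i : ℕ) 1 (3 * (k : ℕ))
  | .s0 i, .s2 k => sMulS F 0 (i : ℕ) 2 (3 * (k : ℕ))
  | .s2 k, .s0 i => sMulS F 0 (i : ℕ) 2 (3 * (k : ℕ))
  | .s1 h, .s1 k => sMulS F 1 (3 * (h : ℕ)) 1 (3 * (k : ℕ))
  | .s1 h, .s2 k => sMulS F 1 (3 * (h : ℕ)) 2 (3 * (k : ℕ))
  | .s2 k, .s1 h => sMulS F 1 (3 * (h : ℕ)) 2 (3 * (k : ℕ))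
  | .s2 h, .s2 k => sMulS F 2 (3 * (h : ℕ)) 2 (3 * (k : ℕ))

/-- The commutative bilinear product of `Ĥ`, as a bilinear map. -/
noncomputable def hatMul : HatH F →ₗ[F] HatH F →ₗ[F] HatH F :=
  Finsupp.lift (HatH F →ₗ[F] HatH F) F HatB fun x => Finsupp.lift (HatH F) F HatB (mulB F x)

/-- The product of two elements of `Ĥ`. -/
noncomputable def hmul (x y : HatH F) : HatH F := hatMul F x y


/-- The linear map `f̂`, determined on basis vectors by `â_i ↦ â_{−i+1}`,
`ŝ_{0̄,j} ↦ ŝ_{0̄,j}` for `3 ∤ j`, `ŝ_{0̄,3k} ↦ ŝ_{1̄,3k}`, `ŝ_{1̄,3k} ↦ ŝ_{0̄,3k}`,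
`ŝ_{2̄,3k} ↦ ŝ_{2̄,3k}`. -/
noncomputable def fHatB : HatB → HatH F
  | .a i => aHat F (-i + 1)
  | .s0 j => sHat F 1 (j : ℕ)
  | .s1 k => sHat F 0 (3 * (k : ℕ))
  | .s2 k => sHat F 2 (3 * (k : ℕ))

noncomputable def fHat : HatH F →ₗ[F] HatH F := Finsupp.lift (HatH F) F HatB (fHatB F)

section

variable {F}

lemma zmod3_cases : ∀ r : ZMod 3, r = 0 ∨ r = 1 ∨ r = 2 := by decide

lemma eq_pnat_or_eq_three_mul_of_ne_zero {j : ℕ} (hj : j ≠ 0) :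
    (∃ n : ℕ+, ¬ 3 ∣ (n : ℕ) ∧ j = n) ∨ ∃ k : ℕ+, j = 3 * (k : ℕ) := by
  by_cases h3 : 3 ∣ j
  · obtain ⟨k, rfl⟩ := h3
    exact Or.inr ⟨⟨k, by omega⟩, rfl⟩
  · exact Or.inl ⟨⟨j, Nat.pos_of_ne_zero hj⟩, h3, rfl⟩

lemma sHat_zero_right (r : ZMod 3) : sHat F r 0 = 0 := by simp [sHat]

lemma sHat_of_not_three_dvd {n : ℕ+} (h3 : ¬ 3 ∣ (n : ℕ)) (r : ZMod 3) :
    sHat F r n = Finsupp.single (.s0 n) 1 := by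
  simp only [sHat, PNat.ne_zero, ↓reduceDIte, h3]
  rfl

lemma sHat_congr_left {j : ℕ} (h3 : ¬ 3 ∣ j) (r t : ZMod 3) : sHat F r j = sHat F t j := by
  unfold sHat
  simp [h3]

lemma sHat_zero_pnat (n : ℕ+) : sHat F 0 n = Finsupp.single (.s0 n) 1 := by
  by_cases h3 : 3 ∣ (n : ℕ) <;> simp only [sHat, PNat.ne_zero, ↓reduceDIte, h3, ↓reduceIte] <;> rfl

lemma sHat_zero_three_mul (k : ℕ+) : sHat F 0 (3 * k) = Finsupp.single (.s0 (3 * k)) 1 :=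
  sHat_zero_pnat (3 * k)

lemma sHat_one_three_mul (k : ℕ+) : sHat F 1 (3 * k) = Finsupp.single (.s1 k) 1 := by
  simp only [sHat, mul_eq_zero, OfNat.ofNat_ne_zero, PNat.ne_zero, or_self, ↓reduceDIte,
    dvd_mul_right, (by decide : (1 : ZMod 3) ≠ 0), ↓reduceIte, ne_eq, not_false_eq_true,
    mul_div_cancel_left₀]
  rfl

lemma sHat_two_three_mul (k : ℕ+) : sHat F 2 (3 * k) = Finsupp.single (.s2 k) 1 := by
  simp only [sHat, mul_eq_zero, OfNat.ofNat_ne_zero, PNat.ne_zero, or_self, ↓reduceDIte,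
    dvd_mul_right, (by decide : (2 : ZMod 3) ≠ 0), ↓reduceIte, (by decide : (2 : ZMod 3) ≠ 1),
    ne_eq, not_false_eq_true, mul_div_cancel_left₀]
  rfl

lemma single_eq_aHat_or_sHat (b : HatB) :
    (∃ i, Finsupp.single b 1 = aHat F i) ∨
      ∃ r j, j ≠ 0 ∧ Finsupp.single b 1 = sHat F r j := by
  cases b with
  | a i => exact Or.inl ⟨i, rfl⟩
  | s0 n => exact Or.inr ⟨0, n, n.ne_zero, (sHat_zero_pnat n).symm⟩
  | s1 k => exact Or.inr ⟨1, 3 * k, by simp, (sHat_one_three_mul k).symm⟩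
  | s2 k => exact Or.inr ⟨2, 3 * k, by simp, (sHat_two_three_mul k).symm⟩

lemma fHat_single (b : HatB) : fHat F (Finsupp.single b 1) = fHatB F b := by
  simp [fHat]

lemma fHat_aHat (i : ℤ) : fHat F (aHat F i) = aHat F (-i + 1) :=
  fHat_single _

lemma fHat_sHat (r : ZMod 3) (j : ℕ) : fHat F (sHat F r j) = sHat F (1 - r) j := by
  rcases eq_or_ne j 0 with rfl | hj
  · simp [sHat_zero_right]
  rcases eq_pnat_or_eq_three_mul_of_ne_zero hj with ⟨n, h3, rfl⟩ | ⟨k, rfl⟩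
  · rw [sHat_of_not_three_dvd h3, fHat_single]
    exact sHat_congr_left h3 1 (1 - r)
  rcases zmod3_cases r with rfl | rfl | rfl
  · rw [sHat_zero_three_mul, fHat_single, sub_zero]; rfl
  · rw [sHat_one_three_mul, fHat_single, sub_self]; rfl
  · rw [sHat_two_three_mul, fHat_single, (by decide : (1 : ZMod 3) - 2 = 2)]; rfl

lemma fHat_involutive : Function.Involutive (fHat F) := by
  suffices fHat F ∘ₗ fHat F = LinearMap.id from fun x => LinearMap.congr_fun this x
  refine Finsupp.basisSingleOne.ext fun b => ?_
  rcases single_eq_aHat_or_sHat (F := F) b with ⟨i, hb⟩ | ⟨r, j, -, hb⟩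
  · simp [Finsupp.coe_basisSingleOne, hb, fHat_aHat]
  · simp [Finsupp.coe_basisSingleOne, hb, fHat_sHat]

lemma fHat_sSum (n : ℕ) : fHat F (sSum F n) = sSum F n := by
  simp only [sSum, map_add, fHat_sHat, sub_zero, sub_self, (by decide : (1 : ZMod 3) - 2 = 2)]
  abel

lemma fHat_sT (r t : ZMod 3) (n : ℕ) : fHat F (sT F r t n) = sT F (1 - r) (1 - t) n := by
  have third : (1 : ZMod 3) - -(r + t) = -((1 - r) + (1 - t)) := by revert r t; decide
  simp only [sT, map_add, map_sub, fHat_sHat, third]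

lemma hatC_one_sub : ∀ i r : ZMod 3, hatC (1 - i) (1 - r) = -hatC i r := by decide

lemma fHat_aMulS (i : ℤ) (r : ZMod 3) (j : ℕ) :
    fHat F (aMulS F i r j) = aMulS F (-i + 1) (1 - r) j := by
  have hC : hatC ((-i + 1 : ℤ) : ZMod 3) (1 - r) = -hatC (i : ZMod 3) r := by
    push_cast
    rw [neg_add_eq_sub, hatC_one_sub]
  simp only [aMulS, map_add, map_sub, map_smul, fHat_aHat, fHat_sHat, hC,
    show -(i - (j : ℤ)) + 1 = -i + 1 + j by ring, show -(i + (j : ℤ)) + 1 = -i + 1 - j by ring,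
    show (1 : ZMod 3) - (r - 1) = 1 - r + 1 by ring, show (1 : ZMod 3) - (r + 1) = 1 - r - 1 by ring]
  push_cast
  module

lemma fHat_sMulS (r t : ZMod 3) (i j : ℕ) :
    fHat F (sMulS F r i t j) = sMulS F (1 - r) i (1 - t) j := by
  simp only [sMulS, sub_right_inj, apply_ite (fHat F), map_add, map_sub, map_smul, fHat_sHat,
    fHat_sT, fHat_sSum]

lemma hmul_single (b c : HatB) :
    hmul F (Finsupp.single b 1) (Finsupp.single c 1) = mulB F b c := by
  simp [hmul, hatMul]

lemma sT_comm (r t : ZMod 3) (n : ℕ) : sT F r t n = sT F t r n := by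
  rw [sT, sT, add_comm r t]
  abel

lemma sMulS_comm (r t : ZMod 3) (i j : ℕ) : sMulS F r i t j = sMulS F t j r i := by
  rcases eq_or_ne r t with rfl | hrt
  · simp only [sMulS, and_comm (a := 3 ∣ i), Nat.dist_comm i j, add_comm i j,
      add_comm (sHat F r i), ↓reduceIte]
  · simp only [sMulS, and_comm (a := 3 ∣ i), hrt, hrt.symm, sT_comm r t, Nat.dist_comm i j,
      add_comm i j, add_comm (sHat F r i), add_comm (sT F t r i), ↓reduceIte]

lemma sHat_natAbs_sub_comm (i j : ℤ) :
    sHat F (i : ZMod 3) (i - j).natAbs = sHat F (j : ZMod 3) (j - i).natAbs := by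
  rw [← Int.natAbs_neg, neg_sub]
  by_cases h3 : 3 ∣ (j - i).natAbs
  · rw [(ZMod.intCast_eq_intCast_iff_dvd_sub i j 3).2 (Int.natCast_dvd.2 h3)]
  · exact sHat_congr_left h3 _ _

lemma mulB_comm (b c : HatB) : mulB F b c = mulB F c b := by
  cases b <;> cases c <;> simp only [mulB, sMulS_comm (F := F) 0 0, sMulS_comm (F := F) 1 1,
    sMulS_comm (F := F) 2 2]
  case a.a i j => rw [add_comm (aHat F i), sHat_natAbs_sub_comm]

lemma hmul_comm (x y : HatH F) : hmul F x y = hmul F y x := by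
  suffices (hatMul F).flip = hatMul F from (LinearMap.congr_fun₂ this x y).symm
  refine LinearMap.ext_basis Finsupp.basisSingleOne Finsupp.basisSingleOne fun b c => ?_
  simpa [Finsupp.coe_basisSingleOne, hatMul] using mulB_comm (F := F) c b

lemma hmul_aHat_aHat (i j : ℤ) :
    hmul F (aHat F i) (aHat F j)
      = (-2 : F) • (aHat F i + aHat F j) + sHat F (i : ZMod 3) (i - j).natAbs :=
  hmul_single _ _

lemma aMulS_of_not_three_dvd {j : ℕ} (h3 : ¬ 3 ∣ j) (i : ℤ) (r : ZMod 3) :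
    aMulS F i r j = aMulS F i 0 j := by
  simp only [aMulS, sHat_congr_left h3 _ 0, sub_self, smul_zero]

lemma hmul_aHat_sHat (i : ℤ) (r : ZMod 3) (j : ℕ) :
    hmul F (aHat F i) (sHat F r j) = aMulS F i r j := by
  rcases eq_or_ne j 0 with rfl | hj
  · simp only [aMulS, sHat_zero_right, hmul, map_zero, Nat.cast_zero, sub_zero, add_zero,
      smul_zero]
    module
  rcases eq_pnat_or_eq_three_mul_of_ne_zero hj with ⟨n, h3, rfl⟩ | ⟨k, rfl⟩
  · rw [sHat_of_not_three_dvd h3, aHat, hmul_single, aMulS_of_not_three_dvd h3]; rfl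
  rcases zmod3_cases r with rfl | rfl | rfl
  · rw [sHat_zero_three_mul, aHat, hmul_single]; rfl
  · rw [sHat_one_three_mul, aHat, hmul_single]; rfl
  · rw [sHat_two_three_mul, aHat, hmul_single]; rfl

lemma sMulS_congr_left {i : ℕ} (h3 : ¬ 3 ∣ i) (r t : ZMod 3) (j : ℕ) :
    sMulS F r i t j = sMulS F 0 i t j := by
  simp only [sMulS, h3, false_and, ↓reduceIte, sHat_congr_left h3 r 0]

lemma sMulS_congr_right {j : ℕ} (h3 : ¬ 3 ∣ j) (r t : ZMod 3) (i : ℕ) :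
    sMulS F r i t j = sMulS F r i 0 j := by
  rw [sMulS_comm, sMulS_congr_left h3, sMulS_comm]

lemma hmul_sHat_sHat_of_not_three_dvd {m : ℕ+} (h3 : ¬ 3 ∣ (m : ℕ)) (r t : ZMod 3) {j : ℕ}
    (hj : j ≠ 0) : hmul F (sHat F r m) (sHat F t j) = sMulS F r m t j := by
  rw [sHat_of_not_three_dvd h3, sMulS_congr_left h3]
  rcases eq_pnat_or_eq_three_mul_of_ne_zero hj with ⟨n, h3j, rfl⟩ | ⟨k, rfl⟩
  · rw [sHat_of_not_three_dvd h3j, sMulS_congr_right h3j, hmul_single]; rfl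
  rcases zmod3_cases t with rfl | rfl | rfl
  · rw [sHat_zero_three_mul, hmul_single]; rfl
  · rw [sHat_one_three_mul, hmul_single]; rfl
  · rw [sHat_two_three_mul, hmul_single]; rfl

lemma hmul_sHat_sHat (r t : ZMod 3) {i j : ℕ} (hi : i ≠ 0) (hj : j ≠ 0) :
    hmul F (sHat F r i) (sHat F t j) = sMulS F r i t j := by
  rcases eq_pnat_or_eq_three_mul_of_ne_zero hi with ⟨m, h3i, rfl⟩ | ⟨h, rfl⟩
  · exact hmul_sHat_sHat_of_not_three_dvd h3i r t hj
  rcases eq_pnat_or_eq_three_mul_of_ne_zero hj with ⟨n, h3j, rfl⟩ | ⟨k, rfl⟩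
  · rw [hmul_comm, sMulS_comm]
    exact hmul_sHat_sHat_of_not_three_dvd h3j t r hi
  rcases zmod3_cases r with rfl | rfl | rfl <;> rcases zmod3_cases t with rfl | rfl | rfl <;>
    simp only [sHat_zero_three_mul, sHat_one_three_mul, sHat_two_three_mul, hmul_single] <;>
    first | rfl | exact sMulS_comm _ _ _ _

lemma fHat_hmul_single (b c : HatB) :
    fHat F (hmul F (Finsupp.single b 1) (Finsupp.single c 1))
      = hmul F (fHat F (Finsupp.single b 1)) (fHat F (Finsupp.single c 1)) := by
  rcases single_eq_aHat_or_sHat (F := F) b with ⟨i, hb⟩ | ⟨r, i, hi, hb⟩ <;>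
    rcases single_eq_aHat_or_sHat (F := F) c with ⟨j, hc⟩ | ⟨t, j, hj, hc⟩ <;> rw [hb, hc]
  · have hres : ((-i + 1 : ℤ) : ZMod 3) = 1 - (i : ZMod 3) := by push_cast; ring
    have hdist : (-i + 1 - (-j + 1)).natAbs = (i - j).natAbs := by
      rw [show -i + 1 - (-j + 1) = -(i - j) by ring, Int.natAbs_neg]
    simp only [hmul_aHat_aHat, map_add, map_smul, fHat_aHat, fHat_sHat, hres, hdist]
  · rw [hmul_aHat_sHat, fHat_aMulS, fHat_aHat, fHat_sHat, hmul_aHat_sHat]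
  · rw [hmul_comm, hmul_aHat_sHat, fHat_aMulS, fHat_aHat, fHat_sHat, hmul_comm, hmul_aHat_sHat]
  · rw [hmul_sHat_sHat r t hi hj, fHat_sMulS, fHat_sHat, fHat_sHat, hmul_sHat_sHat _ _ hi hj]

end

theorem fHat_automorphism :
    Function.Bijective (fHat F) ∧
      ∀ x y : HatH F, fHat F (hmul F x y) = hmul F (fHat F x) (fHat F y) := by
  refine ⟨fHat_involutive.bijective, fun x y => ?_⟩
  suffices (hatMul F).compr₂ (fHat F) = (hatMul F).compl₁₂ (fHat F) (fHat F) from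
    LinearMap.congr_fun₂ this x y
  refine LinearMap.ext_basis Finsupp.basisSingleOne Finsupp.basisSingleOne fun b c => ?_
  simp only [Finsupp.coe_basisSingleOne, LinearMap.compr₂_apply, LinearMap.compl₁₂_apply]
  exact fHat_hmul_single b c

end HatAlgebra
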